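/- arXiv:2102.11714 — 5 statements merged into one kernel-verified Lean document; each statement's English description precedes it below -/
import Mathlib

section
/- Let n, k be given with k ∈ ℕ^n, and let y^1 <_lex y^2 <_lex … <_lex y^{|k|} be the enumeration of S(k) in increasing lexicographic order (and set y^0 := 0). Then for every i ∈ {1,…,|k|} and every m ∈ {0,1,…,i−1} such that y^m ≤ y^i (componentwise), one has S(y^i − y^m) ⊆ { y^i − y^j : j = m, m+1, …, i−1 }. -/
/-!
Put `z = yⁱ - ξ`, so that `yᵐ ≤ z ≤ yⁱ` componentwise and `z ≠ yⁱ`. If `z = 0` then `yᵐ = 0`,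
forcing `m = 0`, and `j = 0` works. Otherwise `z ∈ S(k)`, so `z = yʲ` for some `j ≥ 1`. A
lexicographically increasing enumeration is compatible with the componentwise order, because
`a <_lex b` rules out `b ≤ a`; hence `yᵐ ≤ yʲ ≤ yⁱ` gives `m ≤ j ≤ i`, and `j ≠ i` as `ξ ≠ 0`.
-/

/-- The set of nonzero multi-indices componentwise below `x`:
`S(x) = {ξ ∈ ℕ^n : ξ ≤ x componentwise, ξ ≠ 0}`. -/
def Sfin {n : ℕ} (x : Fin n → ℕ) : Finset (Fin n → ℕ) := (Finset.Iic x).erase 0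

/-- `|x| = ∏_ℓ (x_ℓ + 1) − 1`, the number of elements of `S(x)`. -/
def mCard {n : ℕ} (x : Fin n → ℕ) : ℕ := (∏ ℓ, (x ℓ + 1)) - 1

/-- Strict lexicographic order on `ℕ^n`: `a <_lex b` iff at the first coordinate `u`
where they differ, `a u < b u`. -/
def lexLt {n : ℕ} (a b : Fin n → ℕ) : Prop :=
  ∃ u : Fin n, (∀ ℓ, ℓ < u → a ℓ = b ℓ) ∧ a u < b u

theorem mem_Sfin {n : ℕ} {x ξ : Fin n → ℕ} : ξ ∈ Sfin x ↔ ξ ≠ 0 ∧ ξ ≤ x := by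
  rw [Sfin, Finset.mem_erase, Finset.mem_Iic]

theorem lexLt.not_le {n : ℕ} {a b : Fin n → ℕ} (h : lexLt a b) : ¬b ≤ a := by
  obtain ⟨u, -, hu⟩ := h
  exact fun hba => (hu.trans_le (hba u)).false

theorem index_le_of_le_of_lexLt {n N : ℕ} {y : ℕ → Fin n → ℕ}
    (hlex : ∀ m m', 1 ≤ m → m < m' → m' ≤ N → lexLt (y m) (y m'))
    {a b : ℕ} (hb : 1 ≤ b) (ha : a ≤ N) (hle : y a ≤ y b) : a ≤ b :=
  le_of_not_gt fun hba => (hlex b a hb hba ha).not_le hle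

/-- if `y^1 <_lex … <_lex y^{|k|}` enumerates `S(k)` (with `y^0 = 0`), then
for `1 ≤ i ≤ |k|` and `m < i` with `y^m ≤ y^i`, every `ξ ∈ S(y^i − y^m)` is of the form
`y^i − y^j` for some `j ∈ {m, …, i−1}`. -/
theorem lex_lowerOrder_subset {n : ℕ} (k : Fin n → ℕ) (y : ℕ → Fin n → ℕ)
    (hy0 : y 0 = 0)
    (hmem : ∀ m, 1 ≤ m → m ≤ mCard k → y m ∈ Sfin k)
    (hsurj : ∀ ξ ∈ Sfin k, ∃ m, 1 ≤ m ∧ m ≤ mCard k ∧ y m = ξ)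
    (hlex : ∀ m m', 1 ≤ m → m < m' → m' ≤ mCard k → lexLt (y m) (y m'))
    (i : ℕ) (hi1 : 1 ≤ i) (hik : i ≤ mCard k)
    (m : ℕ) (hmi : m < i) (hle : y m ≤ y i) :
    ∀ ξ ∈ Sfin (y i - y m), ∃ j, m ≤ j ∧ j < i ∧ y j + ξ = y i := by
  intro ξ hξ
  obtain ⟨hξ0, hξle⟩ := mem_Sfin.mp hξ
  have hmk : m ≤ mCard k := hmi.le.trans hik
  have hξi : ξ ≤ y i := hξle.trans tsub_le_self
  have hzξ : y i - ξ + ξ = y i := tsub_add_cancel_of_le hξi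
  have hmz : y m ≤ y i - ξ := le_tsub_of_add_le_left ((le_tsub_iff_right hle).mp hξle)
  rcases eq_or_ne (y i - ξ) 0 with hz0 | hz0
  · have hm0 : m = 0 := by
      by_contra hm
      exact (mem_Sfin.mp (hmem m (Nat.one_le_iff_ne_zero.mpr hm) hmk)).1
        (le_antisymm (hz0 ▸ hmz) bot_le)
    exact ⟨0, hm0.le, hi1, by rw [hy0, ← hz0, hzξ]⟩
  · have hzk : y i - ξ ∈ Sfin k :=
      mem_Sfin.mpr ⟨hz0, tsub_le_self.trans (mem_Sfin.mp (hmem i hi1 hik)).2⟩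
    obtain ⟨j, hj1, hjk, hjz⟩ := hsurj _ hzk
    have hji : j ≠ i := by
      rintro rfl
      rw [← hjz] at hzξ
      exact hξ0 (add_eq_left.mp hzξ)
    refine ⟨j, ?_, ?_, hjz ▸ hzξ⟩
    · exact index_le_of_le_of_lexLt hlex hj1 hmk (hjz ▸ hmz)
    · exact (index_le_of_le_of_lexLt hlex hi1 hjk (hjz ▸ tsub_le_self)).lt_of_ne hji
end

section
/- Let k ∈ ℕ^n and let y^1 <_lex … <_lex y^{|k|} be the lexicographically ordered enumeration of S(k), with y^0 := 0. Fix i ∈ {1,…,|k|} and m ∈ {0,…,i−1} with y^m ≤ y^i. Then for every ξ ∈ S(y^i − y^m) there exists exactly one index j ∈ {m, m+1, …, i−1} with y^i − y^j = ξ; equivalently, ∑_{j=1}^{i−m} 𝟙(y^i − y^{i−j} = ξ) = 1. -/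
theorem not_lexLt_of_le {n : ℕ} {a b : Fin n → ℕ} (h : a ≤ b) : ¬ lexLt b a := by
  rintro ⟨u, -, hu⟩
  exact (h u).not_gt hu

section LexIncreasing

variable {n N : ℕ} {y : ℕ → Fin n → ℕ}

theorem le_of_apply_le_of_lexLt (hy0 : y 0 = 0) (hne : ∀ m, 1 ≤ m → m ≤ N → y m ≠ 0)
    (hlex : ∀ m m', 1 ≤ m → m < m' → m' ≤ N → lexLt (y m) (y m'))
    {a b : ℕ} (ha : a ≤ N) (h : y a ≤ y b) : a ≤ b := by
  by_contra! hba
  rcases Nat.eq_zero_or_pos b with rfl | hb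
  · exact hne a hba ha (le_antisymm (hy0 ▸ h) bot_le)
  · exact not_lexLt_of_le h (hlex b a hb hba ha)

theorem eq_of_apply_eq_of_lexLt (hy0 : y 0 = 0) (hne : ∀ m, 1 ≤ m → m ≤ N → y m ≠ 0)
    (hlex : ∀ m m', 1 ≤ m → m < m' → m' ≤ N → lexLt (y m) (y m'))
    {a b : ℕ} (ha : a ≤ N) (hb : b ≤ N) (h : y a = y b) : a = b :=
  le_antisymm (le_of_apply_le_of_lexLt hy0 hne hlex ha h.le)
    (le_of_apply_le_of_lexLt hy0 hne hlex hb h.ge)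

end LexIncreasing

theorem exists_apply_eq_of_le {n : ℕ} {k : Fin n → ℕ} {y : ℕ → Fin n → ℕ} (hy0 : y 0 = 0)
    (hsurj : ∀ ξ ∈ Sfin k, ∃ m, 1 ≤ m ∧ m ≤ mCard k ∧ y m = ξ) {η : Fin n → ℕ} (hη : η ≤ k) :
    ∃ j ≤ mCard k, y j = η := by
  by_cases hη0 : η = 0
  · exact ⟨0, Nat.zero_le _, hη0 ▸ hy0⟩
  · obtain ⟨j, -, hj, hjη⟩ := hsurj η (mem_Sfin.2 ⟨hη0, hη⟩)
    exact ⟨j, hj, hjη⟩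

theorem lex_lowerOrder_unique_general {n : ℕ} (k : Fin n → ℕ) (y : ℕ → Fin n → ℕ)
    (hy0 : y 0 = 0)
    (hmem : ∀ m, 1 ≤ m → m ≤ mCard k → y m ∈ Sfin k)
    (hsurj : ∀ ξ ∈ Sfin k, ∃ m, 1 ≤ m ∧ m ≤ mCard k ∧ y m = ξ)
    (hlex : ∀ m m', 1 ≤ m → m < m' → m' ≤ mCard k → lexLt (y m) (y m'))
    (i : ℕ) (hik : i ≤ mCard k)
    (m : ℕ) (hmi : m < i) (hle : y m ≤ y i) :
    ∀ ξ ∈ Sfin (y i - y m),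
      (∃! j : ℕ, m ≤ j ∧ j < i ∧ y j + ξ = y i) ∧
      ((Finset.Ico m i).filter (fun j => y j + ξ = y i)).card = 1 := by
  intro ξ hξ
  obtain ⟨hξ0, hξle⟩ := mem_Sfin.1 hξ
  have hne : ∀ j, 1 ≤ j → j ≤ mCard k → y j ≠ 0 := fun j h1 hj => (mem_Sfin.1 (hmem j h1 hj)).1
  have hξi : ξ ≤ y i := hξle.trans tsub_le_self
  have hsol : ∀ j, y j + ξ = y i ↔ y j = y i - ξ := fun j => (eq_tsub_iff_add_eq_of_le hξi).symm
  obtain ⟨j₀, hj₀, hyj₀⟩ :=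
    exists_apply_eq_of_le hy0 hsurj (tsub_le_self.trans (mem_Sfin.1 (hmem i (by omega) hik)).2)
  have hmj₀ : m ≤ j₀ := le_of_apply_le_of_lexLt hy0 hne hlex (by omega)
    (hyj₀ ▸ le_tsub_of_add_le_left ((le_tsub_iff_right hle).1 hξle))
  have hj₀i : j₀ < i := by
    refine (le_of_apply_le_of_lexLt hy0 hne hlex hj₀ (hyj₀ ▸ tsub_le_self)).lt_of_ne ?_
    rintro rfl
    exact hξ0 (add_eq_left.1 ((hsol j₀).2 hyj₀))
  have hunique : ∀ j, (m ≤ j ∧ j < i ∧ y j + ξ = y i) ↔ j = j₀ := by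
    refine fun j => ⟨fun ⟨_, hji, hj⟩ => ?_, fun hj => hj ▸ ⟨hmj₀, hj₀i, (hsol j₀).2 hyj₀⟩⟩
    exact eq_of_apply_eq_of_lexLt hy0 hne hlex (by omega) hj₀ (((hsol j).1 hj).trans hyj₀.symm)
  refine ⟨⟨j₀, (hunique j₀).2 rfl, fun j hj => (hunique j).1 hj⟩, Finset.card_eq_one.2 ⟨j₀, ?_⟩⟩
  ext j
  simpa only [Finset.mem_filter, Finset.mem_Ico, Finset.mem_singleton, and_assoc] using hunique j

/-- if `y^1 <_lex … <_lex y^{|k|}` enumerates `S(k)` (with `y^0 = 0`), then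
for `1 ≤ i ≤ |k|` and `m < i` with `y^m ≤ y^i`, every `ξ ∈ S(y^i − y^m)` equals
`y^i − y^j` for exactly one `j ∈ {m, …, i−1}`; equivalently the count of such `j` is `1`. -/
theorem lex_lowerOrder_unique {n : ℕ} (k : Fin n → ℕ) (y : ℕ → Fin n → ℕ)
    (hy0 : y 0 = 0)
    (hmem : ∀ m, 1 ≤ m → m ≤ mCard k → y m ∈ Sfin k)
    (hsurj : ∀ ξ ∈ Sfin k, ∃ m, 1 ≤ m ∧ m ≤ mCard k ∧ y m = ξ)
    (hlex : ∀ m m', 1 ≤ m → m < m' → m' ≤ mCard k → lexLt (y m) (y m'))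
    (i : ℕ) (hi1 : 1 ≤ i) (hik : i ≤ mCard k)
    (m : ℕ) (hmi : m < i) (hle : y m ≤ y i) :
    ∀ ξ ∈ Sfin (y i - y m),
      (∃! j : ℕ, m ≤ j ∧ j < i ∧ y j + ξ = y i) ∧
      ((Finset.Ico m i).filter (fun j => y j + ξ = y i)).card = 1 :=
  lex_lowerOrder_unique_general k y hy0 hmem hsurj hlex i hik m hmi hle
end

section
/- Let A : ℝ → Matrix (Fin J) (Fin J) ℝ be continuous on [a,t], and let B(s,t) = ∑_{m=0}^∞ I_m(s,t) be the Peano–Baker series of A. Then B(t,t) = Id and for every s ∈ [a,t] the map s ↦ B(s,t) is differentiable with derivative ∂/∂s B(s,t) = −A(s) B(s,t). -/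
open MeasureTheory intervalIntegral

attribute [local instance] Matrix.linftyOpNormedAddCommGroup Matrix.linftyOpNormedSpace
  Matrix.linftyOpNormedRing Matrix.linftyOpNormedAlgebra

/-- Iterated integrals of the Peano-Baker series:
`I_0(s,t) = Id`, `I_{m+1}(s,t) = int_s^t I_m(s,x) A(x) dx`. -/
noncomputable def iterInt {ι : Type*} [Fintype ι] [DecidableEq ι]
    (A : ℝ → Matrix ι ι ℝ) : ℕ → ℝ → ℝ → Matrix ι ι ℝ
  | 0, _s, _t => 1
  | m + 1, s, t => ∫ x in s..t, iterInt A m s x * A x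

/-- The Peano-Baker series (product integral) of `A` over `(s,t]`. -/
noncomputable def peanoBaker {ι : Type*} [Fintype ι] [DecidableEq ι]
    (A : ℝ → Matrix ι ι ℝ) (s t : ℝ) : Matrix ι ι ℝ :=
  ∑' m : ℕ, iterInt A m s t

open Set Function Nat

/-!
Each iterated integral is bounded by `‖I_m(s,u)‖ ≤ (M (u - s))^m / m!`, where `M` bounds `‖A‖`,
so the series converges absolutely and uniformly on compacts. Exchanging the order of integration
over the triangle `s ≤ y ≤ x ≤ t` turns the defining recursion into the backward recursion
`I_{m+1}(s,t) = ∫_s^t A(y) I_m(y,t) dy`; summing over `m` gives the integral equation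
`B(s,t) = 1 + ∫_s^t A(y) B(y,t) dy`, and the fundamental theorem of calculus differentiates it in
`s`. Since `B(s,t)` only sees `A` on `[s,t]`, we may first extend `A` continuously from `[a,t]`
to all of `ℝ`.
-/

theorem intervalIntegral_intervalIntegral_triangle_swap {E : Type*} [NormedAddCommGroup E]
    [NormedSpace ℝ E] {f : ℝ → ℝ → E} (hf : Continuous (uncurry f)) {s t : ℝ} (hst : s ≤ t) :
    ∫ x in s..t, ∫ y in s..x, f y x = ∫ y in s..t, ∫ x in y..t, f y x := by
  -- both sides are iterated integrals over the square `[s,t]²` of `f` cut off to `y ≤ x`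
  let g : ℝ → ℝ → E := fun y x => if y ≤ x then f y x else 0
  have inner_x : ∀ x ∈ uIcc s t, ∫ y in s..x, f y x = ∫ y in s..t, g y x := by
    intro x hx
    rw [uIcc_of_le hst] at hx
    have hg : (fun y => g y x) = (Iic x).indicator (fun y => f y x) := by
      ext y; simp [g, indicator]
    rw [hg, integral_of_le hst, integral_of_le hx.1, setIntegral_indicator measurableSet_Iic,
      Ioc_inter_Iic, inf_eq_right.mpr hx.2]
  have inner_y : ∀ᵐ y, y ∈ uIoc s t → ∫ x in y..t, f y x = ∫ x in s..t, g y x := by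
    refine ae_of_all _ fun y hy => ?_
    rw [uIoc_of_le hst] at hy
    have hg : g y = (Ici y).indicator (f y) := by
      ext x; simp [g, indicator]
    have hIcc : Ioc s t ∩ Ici y = Icc y t := by
      ext x; simp only [mem_inter_iff, mem_Ioc, mem_Ici, mem_Icc]; grind
    rw [hg, integral_of_le hst, integral_of_le hy.2, setIntegral_indicator measurableSet_Ici, hIcc,
      integral_Icc_eq_integral_Ioc]
  rw [integral_congr inner_x, integral_congr_ae inner_y]
  refine (intervalIntegral_intervalIntegral_swap ?_).symm
  have hg : uncurry g = {p : ℝ × ℝ | p.1 ≤ p.2}.indicator (uncurry f) := by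
    ext p; simp [g, indicator, uncurry]
  rw [hg]
  exact ((hf.continuousOn.integrableOn_compact (isCompact_uIcc.prod isCompact_uIcc)).mono_set
    (prod_mono uIoc_subset_uIcc uIoc_subset_uIcc)).indicator
    (measurableSet_le measurable_fst measurable_snd)

section IntervalIntegralMul
variable {R : Type*} [NormedRing R] [NormedAlgebra ℝ R] [CompleteSpace R] {f : ℝ → R} {a b : ℝ}

theorem intervalIntegral.integral_const_mul_of_intervalIntegrable
    (hf : IntervalIntegrable f volume a b) (c : R) :
    ∫ x in a..b, c * f x = c * ∫ x in a..b, f x := by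
  simpa using (ContinuousLinearMap.mul ℝ R c).intervalIntegral_comp_comm hf

theorem intervalIntegral.integral_mul_const_of_intervalIntegrable
    (hf : IntervalIntegrable f volume a b) (c : R) :
    ∫ x in a..b, f x * c = (∫ x in a..b, f x) * c := by
  simpa using ((ContinuousLinearMap.mul ℝ R).flip c).intervalIntegral_comp_comm hf

end IntervalIntegralMul

section PeanoBaker
variable {ι : Type*} [Fintype ι] [DecidableEq ι] {A : ℝ → Matrix ι ι ℝ}

/- The `L∞` operator norm is only a local instance, whose topology agrees with the product topology
of `Matrix` up to unfolding, so instance search does not find these two classes by itself. -/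
noncomputable instance : ENormedAddMonoid (Matrix ι ι ℝ) := NormedAddGroup.toENormedAddMonoid

instance : TopologicalSpace.PseudoMetrizableSpace (Matrix ι ι ℝ) :=
  PseudoEMetricSpace.pseudoMetrizableSpace

theorem Matrix.linfty_opNorm_one_le : ‖(1 : Matrix ι ι ℝ)‖ ≤ 1 := by
  rcases isEmpty_or_nonempty ι with hι | hι
  · simp [Subsingleton.elim (1 : Matrix ι ι ℝ) 0]
  · exact norm_one.le

theorem norm_iterInt_le {M s : ℝ} (m : ℕ) {u : ℝ} (hsu : s ≤ u)
    (hM : ∀ x ∈ Icc s u, ‖A x‖ ≤ M) :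
    ‖iterInt A m s u‖ ≤ (M * (u - s)) ^ m / m ! := by
  induction m generalizing u with
  | zero => simpa [iterInt] using Matrix.linfty_opNorm_one_le
  | succ m ih =>
    have hbound : ∀ x ∈ Ioc s u, ‖iterInt A m s x * A x‖ ≤ M ^ (m + 1) / m ! * (x - s) ^ m := by
      intro x hx
      have hI := ih hx.1.le fun y hy => hM y ⟨hy.1, hy.2.trans hx.2⟩
      calc ‖iterInt A m s x * A x‖ ≤ ‖iterInt A m s x‖ * ‖A x‖ := norm_mul_le _ _
        _ ≤ (M * (x - s)) ^ m / m ! * M :=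
          mul_le_mul hI (hM x (Ioc_subset_Icc_self hx)) (norm_nonneg _) ((norm_nonneg _).trans hI)
        _ = M ^ (m + 1) / m ! * (x - s) ^ m := by rw [mul_pow, pow_succ]; ring
    have hintegral : ∫ x in s..u, M ^ (m + 1) / m ! * (x - s) ^ m
        = (M * (u - s)) ^ (m + 1) / (m + 1)! := by
      rw [intervalIntegral.integral_const_mul, intervalIntegral.integral_comp_sub_right
        (fun x => x ^ m), integral_pow, factorial_succ]
      push_cast
      rw [mul_pow]
      field_simp
      simp
    calc ‖iterInt A (m + 1) s u‖ = ‖∫ x in s..u, iterInt A m s x * A x‖ := rfl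
      _ ≤ ∫ x in s..u, M ^ (m + 1) / m ! * (x - s) ^ m :=
        norm_integral_le_of_norm_le hsu (ae_of_all _ hbound)
          (Continuous.intervalIntegrable (by fun_prop) _ _)
      _ = (M * (u - s)) ^ (m + 1) / (m + 1)! := hintegral

theorem norm_iterInt_le_of_mem_Icc {M a t y : ℝ} (m : ℕ) (hy : y ∈ Icc a t)
    (hM : ∀ x ∈ Icc a t, ‖A x‖ ≤ M) :
    ‖iterInt A m y t‖ ≤ (M * (t - a)) ^ m / m ! := by
  refine (norm_iterInt_le m hy.2 fun x hx => hM x ⟨hy.1.trans hx.1, hx.2⟩).trans ?_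
  have hM0 : 0 ≤ M := (norm_nonneg _).trans (hM y hy)
  gcongr
  · exact mul_nonneg hM0 (sub_nonneg.mpr hy.2)
  · exact hy.1

theorem summable_iterInt {M s u : ℝ} (hsu : s ≤ u) (hM : ∀ x ∈ Icc s u, ‖A x‖ ≤ M) :
    Summable fun m => iterInt A m s u :=
  .of_norm_bounded (Real.summable_pow_div_factorial _) fun m => norm_iterInt_le m hsu hM

theorem continuous_iterInt (hA : Continuous A) :
    ∀ m, Continuous fun p : ℝ × ℝ => iterInt A m p.1 p.2
  | 0 => continuous_const
  | m + 1 => by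
    have hf : Continuous (uncurry fun (p : ℝ × ℝ) x => iterInt A m p.1 x * A x) :=
      ((continuous_iterInt hA m).comp
        ((continuous_fst.comp continuous_fst).prodMk continuous_snd)).mul (hA.comp continuous_snd)
    have hint (p : ℝ × ℝ) (u : ℝ) :
        IntervalIntegrable (fun x => iterInt A m p.1 x * A x) volume 0 u :=
      (hf.comp (Continuous.prodMk_right p)).intervalIntegrable 0 u
    have hsub : (fun p : ℝ × ℝ => iterInt A (m + 1) p.1 p.2) = fun p =>
        (∫ x in 0..p.2, iterInt A m p.1 x * A x) - ∫ x in 0..p.1, iterInt A m p.1 x * A x :=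
      funext fun p => (integral_interval_sub_left (hint p p.2) (hint p p.1)).symm
    rw [hsub]
    exact (continuous_parametric_intervalIntegral_of_continuous hf continuous_snd).sub
      (continuous_parametric_intervalIntegral_of_continuous hf continuous_fst)

theorem iterInt_succ_eq_integral_mul_iterInt (hA : Continuous A) (m : ℕ) {s t : ℝ}
    (hst : s ≤ t) : iterInt A (m + 1) s t = ∫ y in s..t, A y * iterInt A m y t := by
  induction m generalizing t with
  | zero => simp [iterInt]
  | succ m ih =>
    have hI := continuous_iterInt hA m
    have hf : Continuous (uncurry fun y x => A y * iterInt A m y x * A x) :=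
      ((hA.comp continuous_fst).mul hI).mul (hA.comp continuous_snd)
    calc iterInt A (m + 2) s t = ∫ x in s..t, iterInt A (m + 1) s x * A x := rfl
      _ = ∫ x in s..t, ∫ y in s..x, A y * iterInt A m y x * A x := by
        refine integral_congr fun x hx => ?_
        rw [uIcc_of_le hst] at hx
        rw [ih hx.1]
        exact (integral_mul_const_of_intervalIntegrable
          ((hA.mul (hI.comp (Continuous.prodMk_left x))).intervalIntegrable _ _) _).symm
      _ = ∫ y in s..t, ∫ x in y..t, A y * iterInt A m y x * A x :=
        intervalIntegral_intervalIntegral_triangle_swap hf hst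
      _ = ∫ y in s..t, A y * iterInt A (m + 1) y t := by
        refine integral_congr fun y _ => ?_
        simp only [mul_assoc]
        exact integral_const_mul_of_intervalIntegrable
          ((hI.comp (Continuous.prodMk_right y)).mul hA |>.intervalIntegrable _ _) _

theorem continuousOn_peanoBaker (hA : Continuous A) (a t : ℝ) :
    ContinuousOn (fun y => peanoBaker A y t) (Icc a t) := by
  obtain ⟨M, hM⟩ := isCompact_Icc.exists_bound_of_continuousOn (hA.continuousOn (s := Icc a t))
  exact continuousOn_tsum
    (fun m => ((continuous_iterInt hA m).comp (Continuous.prodMk_left t)).continuousOn)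
    (Real.summable_pow_div_factorial (M * (t - a)))
    fun m y hy => norm_iterInt_le_of_mem_Icc m hy hM

theorem peanoBaker_eq_one_add_integral (hA : Continuous A) {s t : ℝ} (hst : s ≤ t) :
    peanoBaker A s t = 1 + ∫ y in s..t, A y * peanoBaker A y t := by
  obtain ⟨M, hM⟩ := isCompact_Icc.exists_bound_of_continuousOn (hA.continuousOn (s := Icc s t))
  have hbound (m : ℕ) (y : ℝ) (hy : y ∈ uIoc s t) :
      ‖A y * iterInt A m y t‖ ≤ M * ((M * (t - s)) ^ m / m !) := by
    rw [uIoc_of_le hst] at hy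
    have hA_le := hM y (Ioc_subset_Icc_self hy)
    exact (norm_mul_le _ _).trans (mul_le_mul hA_le
      (norm_iterInt_le_of_mem_Icc m (Ioc_subset_Icc_self hy) hM) (norm_nonneg _)
      ((norm_nonneg _).trans hA_le))
  have hlim (y : ℝ) (hy : y ∈ uIoc s t) :
      HasSum (fun m => A y * iterInt A m y t) (A y * peanoBaker A y t) := by
    rw [uIoc_of_le hst] at hy
    exact (summable_iterInt hy.2 fun x hx => hM x ⟨hy.1.le.trans hx.1, hx.2⟩).hasSum.mul_left _
  have hsum : HasSum (fun m => iterInt A (m + 1) s t) (∫ y in s..t, A y * peanoBaker A y t) := by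
    simp only [iterInt_succ_eq_integral_mul_iterInt hA _ hst]
    exact hasSum_integral_of_dominated_convergence (fun m _ => M * ((M * (t - s)) ^ m / m !))
      (fun m => (hA.mul ((continuous_iterInt hA m).comp (Continuous.prodMk_left t))
        ).aestronglyMeasurable) (fun m => ae_of_all _ (hbound m))
      (ae_of_all _ fun _ _ => (Real.summable_pow_div_factorial _).mul_left M)
      intervalIntegrable_const (ae_of_all _ hlim)
  rw [peanoBaker, (summable_iterInt hst hM).tsum_eq_zero_add, hsum.tsum_eq]
  rfl

theorem hasDerivWithinAt_peanoBaker (hA : Continuous A) {a t s : ℝ} (hs : s ∈ Icc a t) :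
    HasDerivWithinAt (fun y => peanoBaker A y t) (-(A s * peanoBaker A s t)) (Icc a t) s := by
  have hg : ContinuousOn (fun y => A y * peanoBaker A y t) (Icc a t) :=
    hA.continuousOn.mul (continuousOn_peanoBaker hA a t)
  have : Fact (s ∈ Icc a t) := ⟨hs⟩
  have hFTC := integral_hasDerivWithinAt_left (s := Icc a t)
    ((hg.mono (Icc_subset_Icc_left hs.1)).intervalIntegrable_of_Icc hs.2)
    (hg.stronglyMeasurableAtFilter_nhdsWithin measurableSet_Icc s) (hg s hs)
  exact (hFTC.const_add 1).congr_of_mem (fun y hy => peanoBaker_eq_one_add_integral hA hy.2) hs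

theorem iterInt_congr {B : ℝ → Matrix ι ι ℝ} {s : ℝ} (m : ℕ) {u : ℝ}
    (h : EqOn A B (uIcc s u)) : iterInt A m s u = iterInt B m s u := by
  induction m generalizing u with
  | zero => rfl
  | succ m ih =>
    refine integral_congr fun x hx => ?_
    have hsub : uIcc s x ⊆ uIcc s u := uIcc_subset_uIcc_left hx
    simp only [ih (h.mono hsub), h hx]

theorem peanoBaker_congr {B : ℝ → Matrix ι ι ℝ} {s u : ℝ} (h : EqOn A B (uIcc s u)) :
    peanoBaker A s u = peanoBaker B s u :=
  tsum_congr fun m => iterInt_congr m h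

theorem peanoBaker_self (A : ℝ → Matrix ι ι ℝ) (t : ℝ) : peanoBaker A t t = 1 := by
  rw [peanoBaker, tsum_eq_single 0 fun m hm => ?_]
  · rfl
  · obtain ⟨k, rfl⟩ := exists_eq_succ_of_ne_zero hm
    exact integral_same

end PeanoBaker

theorem peanoBaker_hasDerivAt_general {J : ℕ}
    (A : ℝ → Matrix (Fin J) (Fin J) ℝ) (a t : ℝ)
    (hA : ContinuousOn A (Set.Icc a t)) :
    peanoBaker A t t = 1 ∧
    ∀ s ∈ Set.Icc a t,
      HasDerivWithinAt (fun s' => peanoBaker A s' t)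
        (-(A s * peanoBaker A s t)) (Set.Icc a t) s := by
  refine ⟨peanoBaker_self A t, fun s hs => ?_⟩
  have hat : a ≤ t := hs.1.trans hs.2
  set A' := IccExtend hat ((Icc a t).domRestrict A)
  have hA' : Continuous A' :=
    continuous_IccExtend_iff.mpr (continuousOn_iff_continuous_domRestrict.mp hA)
  have hAA' : EqOn A' A (Icc a t) := fun x hx => IccExtend_of_mem hat _ hx
  have hB : ∀ y ∈ Icc a t, peanoBaker A' y t = peanoBaker A y t :=
    fun y hy => peanoBaker_congr (hAA'.mono (uIcc_subset_Icc hy (right_mem_Icc.mpr hat)))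
  have h := (hasDerivWithinAt_peanoBaker hA' hs).congr_of_mem (fun y hy => (hB y hy).symm) hs
  rwa [hAA' hs, hB s hs] at h

/-- the Peano-Baker series satisfies `B(t,t) = Id` and, as a function of its
lower limit `s ∈ [a,t]`, is differentiable with derivative `-A(s) B(s,t)`. -/
theorem peanoBaker_hasDerivAt {J : ℕ}
    (A : ℝ → Matrix (Fin J) (Fin J) ℝ) (a t : ℝ) (hat : a ≤ t)
    (hA : ContinuousOn A (Set.Icc a t)) :
    peanoBaker A t t = 1 ∧
    ∀ s ∈ Set.Icc a t,
      HasDerivWithinAt (fun s' => peanoBaker A s' t)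
        (-(A s * peanoBaker A s t)) (Set.Icc a t) s :=
  peanoBaker_hasDerivAt_general A a t hA
end

section
/- Fix k ∈ ℕ^n and continuous r, intensity matrix M and continuous payments as in the setup. Suppose the matrix-valued functions V^{(y)}(·,t) : [0,t] → Matrix (Fin J) (Fin J) ℝ, y ∈ S̃(k), satisfy the backward matrix moment ODE system: ∂/∂s V^{(y)}(s,t) = ( ȳ r(s) Id − M(s) ) V^{(y)}(s,t) − ∑_ℓ y_ℓ R_ℓ(s) V^{(y−e_ℓ)}(s,t) − ∑_{ξ ∈ S(y), ξ ∉ E_n} ( ∏_ℓ C(y_ℓ, ξ_ℓ) ) C^{(ξ)}(s) V^{(y−ξ)}(s,t), with V^{(y)}(t,t) = 𝟙(y=0)·Id. Define the scalar functions V_i^{(y)}(s,t) := (V^{(y)}(s,t)·𝟙)_i, where 𝟙 = (1,…,1)'. Then for every y ∈ S̃(k) and i ∈ {0,…,J−1}: ∂/∂s V_i^{(y)}(s,t) = ( ȳ r(s) + μ_{i·}(s) ) V_i^{(y)}(s,t) − ∑_{ℓ=1}^n y_ℓ b^ℓ_i(s) V_i^{(y−e_ℓ)}(s,t) − ∑_{j≠i}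 μ_{ij}(s) ∑_{ξ ∈ S̃(y)} ( ∏_ℓ C(y_ℓ, ξ_ℓ) (b^ℓ_{ij}(s))^{ξ_ℓ} ) V_j^{(y−ξ)}(s,t), with V_i^{(y)}(t,t) = 𝟙(y=0), where μ_{i·}(s) = ∑_{j≠i} μ_{ij}(s). -/
/-! Multiplying the matrix equation on the right by `𝟙` gives the scalar one, since row sums
commute with `d/ds`. Writing `M = C^{(0)}` and `R_ℓ = C^{(e_ℓ)} + Δ(b^ℓ)` folds every coupling
term into a single sum over `ξ ∈ S̃(y)`; because `b^ℓ_{ii} = 0`, the diagonal of `C^{(ξ)}`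
vanishes for `ξ ≠ 0`, so only `ξ = 0` contributes the term `μ_{i·} V_i^{(y)}`, and every other
entry of row `i` is an off-diagonal `μ_{ij} ∏_ℓ (b^ℓ_{ij})^{ξ_ℓ}`. -/

open MeasureTheory intervalIntegral

attribute [local instance] Matrix.linftyOpNormedAddCommGroup Matrix.linftyOpNormedSpace
  Matrix.linftyOpNormedRing Matrix.linftyOpNormedAlgebra

/-- The intensity matrix `M(s)` with off-diagonal entries `μ_{ij}(s)` and diagonal
entries `−∑_{j≠i} μ_{ij}(s)`. -/
noncomputable def intensity {J : ℕ} (μ : Fin J → Fin J → ℝ → ℝ) (s : ℝ) :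
    Matrix (Fin J) (Fin J) ℝ :=
  Matrix.of fun i j => if i = j then -(∑ j' ∈ Finset.univ.erase i, μ i j' s) else μ i j s

/-- The matrix `B_ℓ(s) = {b^ℓ_{ij}(s)}_{i,j}` of transition payments. -/
def Bmat {J n : ℕ} (bt : Fin n → Fin J → Fin J → ℝ → ℝ) (ℓ : Fin n) (s : ℝ) :
    Matrix (Fin J) (Fin J) ℝ :=
  Matrix.of fun i j => bt ℓ i j s

/-- `R_ℓ(s) = M(s) ∘ B_ℓ(s) + Δ(b^ℓ(s))` (Hadamard product plus diagonal of sojourn rates). -/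
noncomputable def Rmat {J n : ℕ} (μ : Fin J → Fin J → ℝ → ℝ)
    (bt : Fin n → Fin J → Fin J → ℝ → ℝ) (bs : Fin n → Fin J → ℝ → ℝ)
    (ℓ : Fin n) (s : ℝ) : Matrix (Fin J) (Fin J) ℝ :=
  Matrix.hadamard (intensity μ s) (Bmat bt ℓ s) + Matrix.diagonal (fun i => bs ℓ i s)

/-- `C^{(y)}(s) = M(s) ∘ B₁(s)^{∘y₁} ∘ ⋯ ∘ Bₙ(s)^{∘yₙ}`. -/
noncomputable def Cmat {J n : ℕ} (μ : Fin J → Fin J → ℝ → ℝ)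
    (bt : Fin n → Fin J → Fin J → ℝ → ℝ) (y : Fin n → ℕ) (s : ℝ) :
    Matrix (Fin J) (Fin J) ℝ :=
  Matrix.hadamard (intensity μ s) (Matrix.of fun i j => ∏ ℓ, (bt ℓ i j s) ^ (y ℓ))

/-- `S̃(x) = S(x) ∪ {0}`, i.e. all multi-indices componentwise below `x`. -/
def Stil {n : ℕ} (x : Fin n → ℕ) : Finset (Fin n → ℕ) := Finset.Iic x

/-- The matrix `A(s,u;θ) = M(u) ∘ {exp(v(s,u)⟨θ,b_{ij}(u)⟩)}_{ij} + v(s,u) ∑_ℓ θ_ℓ Δ(b^ℓ(u))`,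
where `v(s,u) = exp(−∫_s^u r)`. -/
noncomputable def Amat {J n : ℕ} (r : ℝ → ℝ) (μ : Fin J → Fin J → ℝ → ℝ)
    (bt : Fin n → Fin J → Fin J → ℝ → ℝ) (bs : Fin n → Fin J → ℝ → ℝ)
    (s u : ℝ) (θ : Fin n → ℝ) : Matrix (Fin J) (Fin J) ℝ :=
  Matrix.of (fun i j => intensity μ u i j *
      Real.exp (Real.exp (-∫ x in s..u, r x) * ∑ ℓ, θ ℓ * bt ℓ i j u))
    + Real.exp (-∫ x in s..u, r x) • ∑ ℓ, θ ℓ • Matrix.diagonal (fun i => bs ℓ i u)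

/-- The right-hand side of the backward matrix moment ODE system:
`(ȳ r(s) Id − M(s)) V^{(y)} − ∑_ℓ y_ℓ R_ℓ(s) V^{(y−e_ℓ)}
  − ∑_{ξ ∈ S(y), ξ ∉ E_n} (∏_ℓ C(y_ℓ,ξ_ℓ)) C^{(ξ)}(s) V^{(y−ξ)}`,
as (−1) times the `s`-derivative, i.e. this is exactly `∂/∂s V^{(y)}(s,t)`. -/
noncomputable def momentRHS {J n : ℕ} (r : ℝ → ℝ) (μ : Fin J → Fin J → ℝ → ℝ)
    (bt : Fin n → Fin J → Fin J → ℝ → ℝ) (bs : Fin n → Fin J → ℝ → ℝ)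
    (V : (Fin n → ℕ) → ℝ → Matrix (Fin J) (Fin J) ℝ)
    (y : Fin n → ℕ) (s : ℝ) : Matrix (Fin J) (Fin J) ℝ :=
  ((∑ ℓ, (y ℓ : ℝ)) * r s) • V y s - intensity μ s * V y s
    - ∑ ℓ, (y ℓ : ℝ) • (Rmat μ bt bs ℓ s * V (y - Pi.single ℓ 1) s)
    - ∑ ξ ∈ (Sfin y).filter (fun ξ => ¬ ∃ ℓ, ξ = Pi.single ℓ 1),
        (∏ ℓ, ((y ℓ).choose (ξ ℓ) : ℝ)) • (Cmat μ bt ξ s * V (y - ξ) s)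

open Finset Matrix

theorem HasDerivAt.matrix_apply {ι κ : Type*} [Fintype ι] [Fintype κ]
    {A : ℝ → Matrix ι κ ℝ} {A' : Matrix ι κ ℝ} {s : ℝ} (h : HasDerivAt A A' s) (i : ι) (j : κ) :
    HasDerivAt (fun x => A x i j) (A' i j) s :=
  (entryLinearMap ℝ ℝ i j).toContinuousLinearMap.hasFDerivAt.comp_hasDerivAt s h

theorem sum_apply_eq_mulVec_one {ι κ α : Type*} [Fintype κ] [NonAssocSemiring α]
    (A : Matrix ι κ α) (i : ι) :
    ∑ j, A i j = (A *ᵥ 1) i := by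
  simp [mulVec, dotProduct]

theorem prod_apply_single_one {n : ℕ} {M : Type*} [CommMonoid M] (g : Fin n → ℕ → M)
    (hg : ∀ m, g m 0 = 1) (ℓ : Fin n) :
    ∏ m, g m ((Pi.single ℓ 1 : Fin n → ℕ) m) = g ℓ 1 := by
  rw [prod_eq_single ℓ (fun m _ hm => by simp [Pi.single_eq_of_ne hm, hg]) (by simp)]
  simp

theorem sum_Stil_split {n : ℕ} {M : Type*} [AddCommMonoid M] (y : Fin n → ℕ)
    (f : (Fin n → ℕ) → M) (hf : ∀ ℓ, y ℓ = 0 → f (Pi.single ℓ 1) = 0) :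
    ∑ ξ ∈ Stil y, f ξ = f 0 + ∑ ℓ, f (Pi.single ℓ 1)
      + ∑ ξ ∈ (Sfin y).filter (fun ξ => ¬ ∃ ℓ, ξ = Pi.single ℓ 1), f ξ := by
  classical
  have hunits : (Sfin y).filter (fun ξ => ∃ ℓ, ξ = Pi.single ℓ 1)
      = (univ.filter fun ℓ => y ℓ ≠ 0).image fun ℓ => Pi.single ℓ 1 := by
    ext ξ
    simp only [Sfin, mem_filter, mem_erase, mem_Iic, mem_image, mem_univ, true_and]
    constructor
    · rintro ⟨⟨-, hle⟩, ℓ, rfl⟩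
      exact ⟨ℓ, by simpa [Nat.one_le_iff_ne_zero] using hle ℓ, rfl⟩
    · rintro ⟨ℓ, hℓ, rfl⟩
      refine ⟨⟨by simp, fun m => ?_⟩, ℓ, rfl⟩
      rcases eq_or_ne m ℓ with rfl | hm
      · simpa [Nat.one_le_iff_ne_zero] using hℓ
      · simp [Pi.single_eq_of_ne hm]
  have hinj : Function.Injective fun ℓ : Fin n => (Pi.single ℓ 1 : Fin n → ℕ) :=
    fun a b h => by simpa [Pi.single_apply] using congrFun h a
  rw [Stil, ← insert_erase (mem_Iic.mpr (zero_le : 0 ≤ y)), sum_insert (notMem_erase 0 _),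
    add_assoc, ← Sfin, ← sum_filter_add_sum_filter_not _ (fun ξ => ∃ ℓ, ξ = Pi.single ℓ 1),
    hunits, sum_image hinj.injOn,
    sum_filter_of_ne (p := fun ℓ => y ℓ ≠ 0) fun ℓ _ h hy => h (hf ℓ hy)]

section MarkovModel

variable {J n : ℕ} (μ : Fin J → Fin J → ℝ → ℝ) (bt : Fin n → Fin J → Fin J → ℝ → ℝ)

theorem Cmat_zero (s : ℝ) : Cmat μ bt 0 s = intensity μ s := by
  ext i j
  simp [Cmat]

theorem Cmat_single (ℓ : Fin n) (s : ℝ) :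
    Cmat μ bt (Pi.single ℓ 1) s = hadamard (intensity μ s) (Bmat bt ℓ s) := by
  ext i j
  simp [Cmat, Bmat, prod_apply_single_one (fun m k => bt m i j s ^ k)]

theorem Rmat_eq_Cmat_single_add (bs : Fin n → Fin J → ℝ → ℝ) (ℓ : Fin n) (s : ℝ) :
    Rmat μ bt bs ℓ s = Cmat μ bt (Pi.single ℓ 1) s + diagonal fun i => bs ℓ i s := by
  rw [Rmat, Cmat_single]

theorem prod_choose_single (y : Fin n → ℕ) (ℓ : Fin n) :
    ∏ m, ((y m).choose ((Pi.single ℓ 1 : Fin n → ℕ) m) : ℝ) = y ℓ := by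
  simp [prod_apply_single_one (fun m k => ((y m).choose k : ℝ))]

theorem momentRHS_eq_sum_Stil (r : ℝ → ℝ) (bs : Fin n → Fin J → ℝ → ℝ)
    (V : (Fin n → ℕ) → ℝ → Matrix (Fin J) (Fin J) ℝ) (y : Fin n → ℕ) (s : ℝ) :
    momentRHS r μ bt bs V y s = ((∑ ℓ, (y ℓ : ℝ)) * r s) • V y s
      - ∑ ℓ, (y ℓ : ℝ) • (diagonal (fun i => bs ℓ i s) * V (y - Pi.single ℓ 1) s)
      - ∑ ξ ∈ Stil y, (∏ ℓ, ((y ℓ).choose (ξ ℓ) : ℝ)) • (Cmat μ bt ξ s * V (y - ξ) s) := by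
  rw [sum_Stil_split y _ fun ℓ hℓ => by simp [prod_choose_single, hℓ]]
  simp only [momentRHS, Cmat_zero, prod_choose_single, Rmat_eq_Cmat_single_add, add_mul,
    smul_add, sum_add_distrib, Pi.zero_apply, Nat.choose_zero_right, Nat.cast_one, prod_const_one,
    tsub_zero, one_smul]
  abel

theorem Cmat_apply_of_ne (ξ : Fin n → ℕ) (s : ℝ) {i j : Fin J} (hij : i ≠ j) :
    Cmat μ bt ξ s i j = μ i j s * ∏ ℓ, bt ℓ i j s ^ ξ ℓ := by
  simp [Cmat, intensity, hij]

theorem Cmat_apply_self (hbt0 : ∀ ℓ i s, bt ℓ i i s = 0) (ξ : Fin n → ℕ) (s : ℝ) (i : Fin J) :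
    Cmat μ bt ξ s i i = if ξ = 0 then -∑ j ∈ univ.erase i, μ i j s else 0 := by
  simp only [Cmat, intensity, hadamard_apply, of_apply, if_true, hbt0, zero_pow_eq]
  rw [prod_ite_zero]
  simp [funext_iff]

theorem Cmat_mulVec_apply (hbt0 : ∀ ℓ i s, bt ℓ i i s = 0) (ξ : Fin n → ℕ) (s : ℝ)
    (w : Fin J → ℝ) (i : Fin J) :
    (Cmat μ bt ξ s *ᵥ w) i = (if ξ = 0 then -(∑ j ∈ univ.erase i, μ i j s) * w i else 0)
      + ∑ j ∈ univ.erase i, μ i j s * (∏ ℓ, bt ℓ i j s ^ ξ ℓ) * w j := by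
  rw [mulVec, dotProduct, ← add_sum_erase _ _ (mem_univ i), Cmat_apply_self μ bt hbt0, ite_mul,
    zero_mul]
  congr 1
  refine sum_congr rfl fun j hj => ?_
  rw [Cmat_apply_of_ne μ bt ξ s (ne_of_mem_erase hj).symm, mul_assoc]

theorem sum_Stil_Cmat_mulVec_apply (hbt0 : ∀ ℓ i s, bt ℓ i i s = 0) (y : Fin n → ℕ) (s : ℝ)
    (w : (Fin n → ℕ) → Fin J → ℝ) (i : Fin J) :
    ∑ ξ ∈ Stil y, (∏ ℓ, ((y ℓ).choose (ξ ℓ) : ℝ)) * (Cmat μ bt ξ s *ᵥ w ξ) i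
      = -(∑ j ∈ univ.erase i, μ i j s) * w 0 i
        + ∑ j ∈ univ.erase i, μ i j s *
            ∑ ξ ∈ Stil y, (∏ ℓ, ((y ℓ).choose (ξ ℓ) : ℝ) * bt ℓ i j s ^ ξ ℓ) * w ξ j := by
  simp only [Cmat_mulVec_apply μ bt hbt0, mul_add, sum_add_distrib, mul_ite, mul_zero,
    sum_ite_eq', Stil, mem_Iic, zero_le, if_true, mul_sum]
  rw [sum_comm]
  simp only [Pi.zero_apply, Nat.choose_zero_right, Nat.cast_one, prod_const_one, one_mul,
    prod_mul_distrib]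
  exact congrArg _ (sum_congr rfl fun j _ => sum_congr rfl fun ξ _ => by ring)

end MarkovModel

theorem sum_momentRHS_apply {J n : ℕ} (r : ℝ → ℝ) (μ : Fin J → Fin J → ℝ → ℝ)
    (bt : Fin n → Fin J → Fin J → ℝ → ℝ) (bs : Fin n → Fin J → ℝ → ℝ)
    (hbt0 : ∀ ℓ i s, bt ℓ i i s = 0)
    (V : (Fin n → ℕ) → ℝ → Matrix (Fin J) (Fin J) ℝ) (y : Fin n → ℕ) (s : ℝ) (i : Fin J) :
    ∑ j, momentRHS r μ bt bs V y s i j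
      = ((∑ ℓ, (y ℓ : ℝ)) * r s + ∑ j ∈ univ.erase i, μ i j s) * (∑ j, V y s i j)
        - (∑ ℓ, (y ℓ : ℝ) * bs ℓ i s * ∑ j, V (y - Pi.single ℓ 1) s i j)
        - ∑ j ∈ univ.erase i, μ i j s *
            ∑ ξ ∈ Stil y, (∏ ℓ, ((y ℓ).choose (ξ ℓ) : ℝ) * bt ℓ i j s ^ ξ ℓ)
              * ∑ j', V (y - ξ) s j j' := by
  simp only [sum_apply_eq_mulVec_one]
  rw [momentRHS_eq_sum_Stil]
  simp only [sub_mulVec, sum_mulVec, smul_mulVec, ← mulVec_mulVec, Pi.sub_apply,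
    Finset.sum_apply, Pi.smul_apply, smul_eq_mul, mulVec_diagonal]
  rw [sum_Stil_Cmat_mulVec_apply μ bt hbt0 y s (fun ξ => V (y - ξ) s *ᵥ 1) i]
  simp only [tsub_zero, mul_assoc]
  ring

theorem statewise_moments_ode_general {J n : ℕ} (r : ℝ → ℝ) (μ : Fin J → Fin J → ℝ → ℝ)
    (bt : Fin n → Fin J → Fin J → ℝ → ℝ) (bs : Fin n → Fin J → ℝ → ℝ)
    (hbt0 : ∀ ℓ i s, bt ℓ i i s = 0)
    (t : ℝ) (k : Fin n → ℕ)
    (V : (Fin n → ℕ) → ℝ → Matrix (Fin J) (Fin J) ℝ)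
    (hode : ∀ y ∈ Stil k, ∀ s : ℝ, s ≤ t →
      HasDerivAt (V y) (momentRHS r μ bt bs V y s) s)
    (hterm : ∀ y ∈ Stil k, V y t = if y = 0 then 1 else 0) :
    ∀ y ∈ Stil k, ∀ i : Fin J,
      (∀ s : ℝ, s ≤ t →
        HasDerivAt (fun s' => ∑ j, V y s' i j)
          (((∑ ℓ, (y ℓ : ℝ)) * r s + ∑ j ∈ Finset.univ.erase i, μ i j s) * (∑ j, V y s i j)
            - (∑ ℓ, (y ℓ : ℝ) * bs ℓ i s * ∑ j, V (y - Pi.single ℓ 1) s i j)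
            - ∑ j ∈ Finset.univ.erase i, μ i j s *
                ∑ ξ ∈ Stil y,
                  (∏ ℓ, ((y ℓ).choose (ξ ℓ) : ℝ) * (bt ℓ i j s) ^ (ξ ℓ))
                    * ∑ j' , V (y - ξ) s j j') s) ∧
      (∑ j, V y t i j) = if y = 0 then 1 else 0 := by
  intro y hy i
  refine ⟨fun s hs => ?_, ?_⟩
  · rw [← sum_momentRHS_apply r μ bt bs hbt0]
    exact HasDerivAt.fun_sum fun j _ => (hode y hy s hs).matrix_apply i j
  · rw [hterm y hy]
    split_ifs <;> simp [one_apply]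

/-- if the matrix partial moments `V^{(y)}(·,t)`, `y ∈ S̃(k)`, satisfy the
backward matrix moment ODE system with terminal conditions `V^{(y)}(t,t) = 𝟙(y=0)·Id`,
then the state-wise conditional moments `V_i^{(y)}(s,t) = (V^{(y)}(s,t)·𝟙)_i` satisfy
the scalar backward moment equations with terminal conditions `V_i^{(y)}(t,t) = 𝟙(y=0)`. -/
theorem statewise_moments_ode {J n : ℕ} (r : ℝ → ℝ) (μ : Fin J → Fin J → ℝ → ℝ)
    (bt : Fin n → Fin J → Fin J → ℝ → ℝ) (bs : Fin n → Fin J → ℝ → ℝ)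
    (hr : Continuous r)
    (hμc : ∀ i j, Continuous (μ i j))
    (hμ0 : ∀ i j, i ≠ j → ∀ s, 0 ≤ μ i j s)
    (hbtc : ∀ ℓ i j, Continuous (bt ℓ i j))
    (hbsc : ∀ ℓ i, Continuous (bs ℓ i))
    (hbt0 : ∀ ℓ i s, bt ℓ i i s = 0)
    (t : ℝ) (k : Fin n → ℕ)
    (V : (Fin n → ℕ) → ℝ → Matrix (Fin J) (Fin J) ℝ)
    (hode : ∀ y ∈ Stil k, ∀ s : ℝ, s ≤ t →
      HasDerivAt (V y) (momentRHS r μ bt bs V y s) s)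
    (hterm : ∀ y ∈ Stil k, V y t = if y = 0 then 1 else 0) :
    ∀ y ∈ Stil k, ∀ i : Fin J,
      (∀ s : ℝ, s ≤ t →
        HasDerivAt (fun s' => ∑ j, V y s' i j)
          (((∑ ℓ, (y ℓ : ℝ)) * r s + ∑ j ∈ Finset.univ.erase i, μ i j s) * (∑ j, V y s i j)
            - (∑ ℓ, (y ℓ : ℝ) * bs ℓ i s * ∑ j, V (y - Pi.single ℓ 1) s i j)
            - ∑ j ∈ Finset.univ.erase i, μ i j s *
                ∑ ξ ∈ Stil y,
                  (∏ ℓ, ((y ℓ).choose (ξ ℓ) : ℝ) * (bt ℓ i j s) ^ (ξ ℓ))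
                    * ∑ j' , V (y - ξ) s j j') s) ∧
      (∑ j, V y t i j) = if y = 0 then 1 else 0 :=
  statewise_moments_ode_general r μ bt bs hbt0 t k V hode hterm
end

section
/- Fix ℓ ≠ m in {1,…,n}, continuous r, μ_{ij} and continuous payments b^ℓ_i, b^ℓ_{ij}, b^m_i, b^m_{ij} as in the setup. Suppose that for each i ∈ {0,…,J−1} the functions V_i^{(ℓ)}, V_i^{(m)} : [0,t] → ℝ satisfy Thiele's differential equations ∂/∂s V_i^{(ℓ)}(s,t) = r(s) V_i^{(ℓ)}(s,t) − b^ℓ_i(s) − ∑_{j≠i} μ_{ij}(s) R^ℓ_{ij}(s) with V_i^{(ℓ)}(t,t) = 0, where R^ℓ_{ij}(s) = b^ℓ_{ij}(s) + V_j^{(ℓ)}(s,t) − V_i^{(ℓ)}(s,t) (and analogously for m), and that V_i^{(ℓ,m)} satisfies the product-moment equation ∂/∂s V_i^{(ℓ,m)}(s,t) = (2r(s) + μ_{i·}(s)) V_i^{(ℓ,m)}(s,t) − b^ℓ_i(s) V_i^{(m)}(s,t) − b^m_i(s) V_i^{(ℓ)}(s,t) − ∑_{j≠i} μ_{ij}(s)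 ( V_j^{(ℓ,m)}(s,t) + b^ℓ_{ij}(s) V_j^{(m)}(s,t) + b^m_{ij}(s) V_j^{(ℓ)}(s,t) + b^ℓ_{ij}(s) b^m_{ij}(s) ), with V_i^{(ℓ,m)}(t,t) = 0 and μ_{i·}(s) = ∑_{j≠i} μ_{ij}(s). Define m_i(s,t) := V_i^{(ℓ,m)}(s,t) − V_i^{(ℓ)}(s,t) V_i^{(m)}(s,t). Then for each i, ∂/∂s m_i(s,t) = 2 r(s) m_i(s,t) − ∑_{j≠i} μ_{ij}(s) ( R^ℓ_{ij}(s) R^m_{ij}(s) + m_j(s,t) − m_i(s,t) ), with terminal condition m_i(t,t) = 0. -/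
/-!
The product rule applied to `m_i = V^{(ℓ,m)}_i − V^{(ℓ)}_i V^{(m)}_i` combines the product-moment
equation with the two Thiele equations; the sojourn payments cancel. The jump terms regroup
because, for each transition `i → j`, `R^ℓ_{ij} R^m_{ij} + m_j − m_i` expands to the jump term of
the product-moment equation, minus `V^{(ℓ,m)}_i`, minus the jump terms `R^ℓ_{ij}` and `R^m_{ij}`
of the Thiele equations weighted by `V^{(m)}_i` and `V^{(ℓ)}_i`.
-/

theorem sum_covariance_jump_eq {ι R : Type*} [CommRing R] (S : Finset ι)
    (μ a b x y z : ι → R) (xi yi zi : R) :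
    ∑ j ∈ S, μ j * ((a j + x j - xi) * (b j + y j - yi) + (z j - x j * y j) - (zi - xi * yi)) =
      ∑ j ∈ S, μ j * (z j + a j * y j + b j * x j + a j * b j) - (∑ j ∈ S, μ j) * zi
        - (∑ j ∈ S, μ j * (a j + x j - xi)) * yi - xi * ∑ j ∈ S, μ j * (b j + y j - yi) := by
  simp only [Finset.sum_mul, Finset.mul_sum, ← Finset.sum_sub_distrib]
  exact Finset.sum_congr rfl fun j _ => by ring

theorem hasDerivAt_covariance {𝕜 ι : Type*} [NontriviallyNormedField 𝕜] (S : Finset ι)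
    (Vℓ Vm Vℓm : ι → 𝕜 → 𝕜) (i : ι) (s r cℓ cm : 𝕜) (μ bℓ bm : ι → 𝕜)
    (hℓ : HasDerivAt (Vℓ i) (r * Vℓ i s - cℓ - ∑ j ∈ S, μ j * (bℓ j + Vℓ j s - Vℓ i s)) s)
    (hm : HasDerivAt (Vm i) (r * Vm i s - cm - ∑ j ∈ S, μ j * (bm j + Vm j s - Vm i s)) s)
    (hℓm : HasDerivAt (Vℓm i)
      ((2 * r + ∑ j ∈ S, μ j) * Vℓm i s - cℓ * Vm i s - cm * Vℓ i s
        - ∑ j ∈ S, μ j * (Vℓm j s + bℓ j * Vm j s + bm j * Vℓ j s + bℓ j * bm j)) s) :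
    HasDerivAt (fun s' => Vℓm i s' - Vℓ i s' * Vm i s')
      (2 * r * (Vℓm i s - Vℓ i s * Vm i s)
        - ∑ j ∈ S, μ j * ((bℓ j + Vℓ j s - Vℓ i s) * (bm j + Vm j s - Vm i s)
            + (Vℓm j s - Vℓ j s * Vm j s) - (Vℓm i s - Vℓ i s * Vm i s))) s := by
  refine (hℓm.sub (hℓ.mul hm)).congr_deriv ?_
  linear_combination sum_covariance_jump_eq S μ bℓ bm (Vℓ · s) (Vm · s) (Vℓm · s)
    (Vℓ i s) (Vm i s) (Vℓm i s)

theorem covariance_thiele_general {J n : ℕ} (r : ℝ → ℝ) (μ : Fin J → Fin J → ℝ → ℝ)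
    (bt : Fin n → Fin J → Fin J → ℝ → ℝ) (bs : Fin n → Fin J → ℝ → ℝ)
    (ℓ m : Fin n) (t : ℝ)
    (Vℓ Vm Vℓm : Fin J → ℝ → ℝ)
    -- Thiele's differential equation for the ℓ-th payment process:
    (hThℓ : ∀ i, ∀ s : ℝ, s ≤ t →
      HasDerivAt (Vℓ i)
        (r s * Vℓ i s - bs ℓ i s
          - ∑ j ∈ Finset.univ.erase i, μ i j s * (bt ℓ i j s + Vℓ j s - Vℓ i s)) s)
    (htermℓ : ∀ i, Vℓ i t = 0)
    -- Thiele's differential equation for the m-th payment process: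
    (hThm : ∀ i, ∀ s : ℝ, s ≤ t →
      HasDerivAt (Vm i)
        (r s * Vm i s - bs m i s
          - ∑ j ∈ Finset.univ.erase i, μ i j s * (bt m i j s + Vm j s - Vm i s)) s)
    (htermm : ∀ i, Vm i t = 0)
    -- the product-moment differential equation:
    (hprod : ∀ i, ∀ s : ℝ, s ≤ t →
      HasDerivAt (Vℓm i)
        ((2 * r s + ∑ j ∈ Finset.univ.erase i, μ i j s) * Vℓm i s
          - bs ℓ i s * Vm i s - bs m i s * Vℓ i s
          - ∑ j ∈ Finset.univ.erase i, μ i j s *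
              (Vℓm j s + bt ℓ i j s * Vm j s + bt m i j s * Vℓ j s
                + bt ℓ i j s * bt m i j s)) s)
    (htermprod : ∀ i, Vℓm i t = 0) :
    ∀ i, (∀ s : ℝ, s ≤ t →
      HasDerivAt (fun s' => Vℓm i s' - Vℓ i s' * Vm i s')
        (2 * r s * (Vℓm i s - Vℓ i s * Vm i s)
          - ∑ j ∈ Finset.univ.erase i, μ i j s *
              ((bt ℓ i j s + Vℓ j s - Vℓ i s) * (bt m i j s + Vm j s - Vm i s)
                + (Vℓm j s - Vℓ j s * Vm j s) - (Vℓm i s - Vℓ i s * Vm i s))) s) ∧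
      (Vℓm i t - Vℓ i t * Vm i t) = 0 :=
  fun i =>
    ⟨fun s hs => hasDerivAt_covariance _ Vℓ Vm Vℓm i s (r s) (bs ℓ i s) (bs m i s)
        (μ i · s) (bt ℓ i · s) (bt m i · s) (hThℓ i s hs) (hThm i s hs) (hprod i s hs),
      by rw [htermprod, htermℓ, htermm, mul_zero, sub_zero]⟩

/-- if the state-wise prospective reserves `V^{(ℓ)}_i`, `V^{(m)}_i` satisfy
Thiele's differential equations and the product moments `V^{(ℓ,m)}_i` satisfy the
product-moment equation, then the conditional covariances
`m_i(s,t) = V^{(ℓ,m)}_i(s,t) − V^{(ℓ)}_i(s,t) V^{(m)}_i(s,t)` satisfy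
`∂/∂s m_i = 2 r(s) m_i − ∑_{j≠i} μ_{ij}(s) (R^ℓ_{ij} R^m_{ij} + m_j − m_i)`
with terminal condition `m_i(t,t) = 0`, where
`R^ℓ_{ij}(s) = b^ℓ_{ij}(s) + V^{(ℓ)}_j(s,t) − V^{(ℓ)}_i(s,t)` is the sum at risk. -/
theorem covariance_thiele {J n : ℕ} (r : ℝ → ℝ) (μ : Fin J → Fin J → ℝ → ℝ)
    (bt : Fin n → Fin J → Fin J → ℝ → ℝ) (bs : Fin n → Fin J → ℝ → ℝ)
    (hr : Continuous r)
    (hμc : ∀ i j, Continuous (μ i j))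
    (hμ0 : ∀ i j, i ≠ j → ∀ s, 0 ≤ μ i j s)
    (hbtc : ∀ ℓ' i j, Continuous (bt ℓ' i j))
    (hbsc : ∀ ℓ' i, Continuous (bs ℓ' i))
    (hbt0 : ∀ ℓ' i s, bt ℓ' i i s = 0)
    (ℓ m : Fin n) (hℓm : ℓ ≠ m) (t : ℝ)
    (Vℓ Vm Vℓm : Fin J → ℝ → ℝ)
    -- Thiele's differential equation for the ℓ-th payment process:
    (hThℓ : ∀ i, ∀ s : ℝ, s ≤ t →
      HasDerivAt (Vℓ i)
        (r s * Vℓ i s - bs ℓ i s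
          - ∑ j ∈ Finset.univ.erase i, μ i j s * (bt ℓ i j s + Vℓ j s - Vℓ i s)) s)
    (htermℓ : ∀ i, Vℓ i t = 0)
    -- Thiele's differential equation for the m-th payment process:
    (hThm : ∀ i, ∀ s : ℝ, s ≤ t →
      HasDerivAt (Vm i)
        (r s * Vm i s - bs m i s
          - ∑ j ∈ Finset.univ.erase i, μ i j s * (bt m i j s + Vm j s - Vm i s)) s)
    (htermm : ∀ i, Vm i t = 0)
    -- the product-moment differential equation:
    (hprod : ∀ i, ∀ s : ℝ, s ≤ t →
      HasDerivAt (Vℓm i)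
        ((2 * r s + ∑ j ∈ Finset.univ.erase i, μ i j s) * Vℓm i s
          - bs ℓ i s * Vm i s - bs m i s * Vℓ i s
          - ∑ j ∈ Finset.univ.erase i, μ i j s *
              (Vℓm j s + bt ℓ i j s * Vm j s + bt m i j s * Vℓ j s
                + bt ℓ i j s * bt m i j s)) s)
    (htermprod : ∀ i, Vℓm i t = 0) :
    ∀ i, (∀ s : ℝ, s ≤ t →
      HasDerivAt (fun s' => Vℓm i s' - Vℓ i s' * Vm i s')
        (2 * r s * (Vℓm i s - Vℓ i s * Vm i s)
          - ∑ j ∈ Finset.univ.erase i, μ i j s *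
              ((bt ℓ i j s + Vℓ j s - Vℓ i s) * (bt m i j s + Vm j s - Vm i s)
                + (Vℓm j s - Vℓ j s * Vm j s) - (Vℓm i s - Vℓ i s * Vm i s))) s) ∧
      (Vℓm i t - Vℓ i t * Vm i t) = 0 :=
  covariance_thiele_general r μ bt bs ℓ m t Vℓ Vm Vℓm hThℓ htermℓ hThm htermm hprod htermprod
end
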